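/- arXiv:math/0405418 — 6 statements merged into one kernel-verified Lean document; each statement's English description precedes it below -/
import Mathlib

section
/- Let V be a nonzero finite-dimensional real inner product space and let ℓ₁,…,ℓ_s (s ≥ 1) be linear functionals on V; define f(x) := max_{1≤i≤s} ℓ_i(x). If there exists a unit vector x with f(x) < 0, then f attains its minimum on the unit sphere S = {x ∈ V : ‖x‖ = 1}, and the minimizer is unique: there is exactly one h ∈ S such that f(h) ≤ f(x) for all x ∈ S. -/
/-!
`f = max_i ℓ_i` is continuous and sublinear, so it attains its minimum `m < 0` on the compact
unit sphere. If two distinct unit vectors `g, h` both attained it, their midpoint `z` would satisfy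
`f z ≤ m` and, by strict convexity of the norm, `‖z‖ < 1`; then `z ≠ 0` because `f 0 = 0 > m`,
and `z / ‖z‖` is a unit vector with `f (z / ‖z‖) = f z / ‖z‖ ≤ m / ‖z‖ < m`.
-/

open Metric

section Sublinear

variable {E : Type*} [NormedAddCommGroup E] [NormedSpace ℝ E] {f : E → ℝ}

theorem exists_norm_eq_one_lt_of_norm_lt_one
    (hsmul : ∀ c : ℝ, 0 ≤ c → ∀ x, f (c • x) = c * f x)
    {z : E} (hz : ‖z‖ < 1) (hfz : f z < 0) : ∃ w : E, ‖w‖ = 1 ∧ f w < f z := by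
  have hz0 : z ≠ 0 := by
    rintro rfl
    have hf0 : f 0 = 0 := by simpa using hsmul 0 le_rfl 0
    exact hfz.ne hf0
  have hzpos : 0 < ‖z‖ := norm_pos_iff.mpr hz0
  refine ⟨‖z‖⁻¹ • z, by simp [norm_smul, hzpos.ne'], ?_⟩
  rw [hsmul _ (inv_nonneg.mpr hzpos.le)]
  have : 1 < ‖z‖⁻¹ := (one_lt_inv₀ hzpos).mpr hz
  nlinarith

theorem eq_of_isMinOn_sphere [StrictConvexSpace ℝ E]
    (hadd : ∀ x y, f (x + y) ≤ f x + f y) (hsmul : ∀ c : ℝ, 0 ≤ c → ∀ x, f (c • x) = c * f x)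
    {g h : E} (hg : g ∈ sphere (0 : E) 1) (hh : h ∈ sphere (0 : E) 1)
    (hgmin : IsMinOn f (sphere 0 1) g) (hhmin : IsMinOn f (sphere 0 1) h) (hneg : f h < 0) :
    g = h := by
  have hfg : f g = f h := le_antisymm (hgmin hh) (hhmin hg)
  rw [mem_sphere_zero_iff_norm] at hg hh
  by_contra hne
  set z : E := (1 / 2 : ℝ) • (g + h)
  have hz : ‖z‖ < 1 := hg ▸ (norm_midpoint_lt_iff (hg.trans hh.symm)).mpr hne
  have hfz : f z ≤ f h := by
    calc f z = 1 / 2 * f (g + h) := hsmul _ (by norm_num) _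
      _ ≤ 1 / 2 * (f g + f h) := by gcongr; exact hadd g h
      _ = f h := by rw [hfg]; ring
  obtain ⟨w, hw, hfw⟩ := exists_norm_eq_one_lt_of_norm_lt_one hsmul hz (hfz.trans_lt hneg)
  exact (hfw.trans_le hfz).not_ge (hhmin (mem_sphere_zero_iff_norm.mpr hw))

theorem existsUnique_isMinOn_sphere [ProperSpace E] [StrictConvexSpace ℝ E] (hf : Continuous f)
    (hadd : ∀ x y, f (x + y) ≤ f x + f y) (hsmul : ∀ c : ℝ, 0 ≤ c → ∀ x, f (c • x) = c * f x)
    {x₀ : E} (hx₀ : x₀ ∈ sphere (0 : E) 1) (hfx₀ : f x₀ < 0) :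
    ∃! h : E, h ∈ sphere (0 : E) 1 ∧ IsMinOn f (sphere 0 1) h := by
  obtain ⟨h, hh, hmin⟩ := (isCompact_sphere (0 : E) 1).exists_isMinOn ⟨x₀, hx₀⟩ hf.continuousOn
  exact ⟨h, ⟨hh, hmin⟩, fun g ⟨hg, hgmin⟩ ↦
    eq_of_isMinOn_sphere hadd hsmul hg hh hgmin hmin ((hmin hx₀).trans_lt hfx₀)⟩

end Sublinear

section MaxOfLinear

variable {ι E : Type*} [AddCommGroup E] [Module ℝ E]

theorem iSup_linearMap_add_le [Finite ι] [Nonempty ι] (ℓ : ι → E →ₗ[ℝ] ℝ) (x y : E) :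
    ⨆ i, ℓ i (x + y) ≤ (⨆ i, ℓ i x) + ⨆ i, ℓ i y :=
  ciSup_le fun i ↦ by
    rw [map_add]
    exact add_le_add (le_ciSup (Set.finite_range fun j ↦ ℓ j x).bddAbove i)
      (le_ciSup (Set.finite_range fun j ↦ ℓ j y).bddAbove i)

theorem iSup_linearMap_smul_of_nonneg (ℓ : ι → E →ₗ[ℝ] ℝ) {c : ℝ} (hc : 0 ≤ c) (x : E) :
    ⨆ i, ℓ i (c • x) = c * ⨆ i, ℓ i x := by
  simp only [map_smul, smul_eq_mul, Real.mul_iSup_of_nonneg hc]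

end MaxOfLinear

theorem continuous_iSup_of_fintype {ι X : Type*} [Fintype ι] [Nonempty ι] [TopologicalSpace X]
    {g : ι → X → ℝ} (hg : ∀ i, Continuous (g i)) : Continuous fun x ↦ ⨆ i, g i x := by
  simp only [← Finset.sup'_univ_eq_ciSup]
  exact Continuous.finset_sup'_apply _ fun i _ ↦ hg i

theorem min_of_max_linear_on_sphere_exists_unique_general
    (V : Type*) [NormedAddCommGroup V] [InnerProductSpace ℝ V]
    [FiniteDimensional ℝ V]
    (s : ℕ) (hs : 1 ≤ s) (ℓ : Fin s → V →ₗ[ℝ] ℝ)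
    (f : V → ℝ) (hf : ∀ x, f x = ⨆ i : Fin s, ℓ i x)
    (hneg : ∃ x : V, ‖x‖ = 1 ∧ f x < 0) :
    ∃! h : V, ‖h‖ = 1 ∧ ∀ x : V, ‖x‖ = 1 → f h ≤ f x := by
  have : Nonempty (Fin s) := ⟨⟨0, hs⟩⟩
  obtain rfl : f = fun x ↦ ⨆ i, ℓ i x := funext hf
  obtain ⟨x₀, hx₀, hfx₀⟩ := hneg
  have hcont : Continuous fun x ↦ ⨆ i, ℓ i x :=
    continuous_iSup_of_fintype fun i ↦ (ℓ i).continuous_of_finiteDimensional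
  simpa only [mem_sphere_zero_iff_norm, IsMinOn, IsMinFilter, Filter.eventually_principal] using
    existsUnique_isMinOn_sphere hcont (iSup_linearMap_add_le ℓ)
      (fun c hc x ↦ iSup_linearMap_smul_of_nonneg ℓ hc x) (mem_sphere_zero_iff_norm.mpr hx₀) hfx₀

/-- Let `V` be a nonzero finite-dimensional real inner product space and
`ℓ₁, …, ℓ_s` (`s ≥ 1`) linear functionals on `V`; let `f x := max_i ℓ_i x`. If there is a
unit vector `x` with `f x < 0`, then `f` attains its minimum on the unit sphere at a
unique point. -/
theorem min_of_max_linear_on_sphere_exists_unique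
    (V : Type*) [NormedAddCommGroup V] [InnerProductSpace ℝ V]
    [FiniteDimensional ℝ V] [Nontrivial V]
    (s : ℕ) (hs : 1 ≤ s) (ℓ : Fin s → V →ₗ[ℝ] ℝ)
    (f : V → ℝ) (hf : ∀ x, f x = ⨆ i : Fin s, ℓ i x)
    (hneg : ∃ x : V, ‖x‖ = 1 ∧ f x < 0) :
    ∃! h : V, ‖h‖ = 1 ∧ ∀ x : V, ‖x‖ = 1 → f h ≤ f x :=
  min_of_max_linear_on_sphere_exists_unique_general V s hs ℓ f hf hneg
end

section
/- Let ℓ₁,…,ℓ_s (s ≥ 1) be linear functionals on ℝⁿ, equipped with the standard inner product, all of whose coefficients are rational, and let f(x) := max_{1≤i≤s} ℓ_i(x). Assume f takes a negative value at some unit vector, and let h be the unique unit vector minimizing f over the unit sphere. Then the ray ℝ_{>0}·h contains a nonzero point with rational coordinates; that is, there exists c > 0 with c·h ∈ ℚⁿ. -/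
/-- A rational linear system solvable over `ℝ` is solvable over `ℚ`. -/
lemma rat_solvable {ι : Type*} [Fintype ι] [DecidableEq ι] (M : ι → ι → ℚ) (v : ι → ℚ)
    (x : ι → ℝ) (hx : ∀ l, ∑ i, (M l i : ℝ) * x i = (v l : ℝ)) :
    ∃ y : ι → ℚ, ∀ l, ∑ i, M l i * y i = v l := by
  classical
  by_contra hcon
  push_neg at hcon
  set T : (ι → ℚ) →ₗ[ℚ] (ι → ℚ) :=
    { toFun := fun y l => ∑ i, M l i * y i
      map_add' := by
        intro y z; funext l
        simp [mul_add, Finset.sum_add_distrib]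
      map_smul' := by
        intro c y; funext l
        simp [Finset.mul_sum, smul_eq_mul]; ring_nf
        exact Finset.sum_congr rfl fun i _ => by ring } with hT
  have hv : v ∉ LinearMap.range T := by
    rintro ⟨y, hy⟩
    obtain ⟨l, hl⟩ := hcon y
    exact hl (congrFun hy l)
  obtain ⟨g, hg0, hgmap⟩ :=
    Submodule.exists_dual_map_eq_bot_of_notMem hv inferInstance
  have hg : ∀ y : ι → ℚ, g (T y) = 0 := by
    intro y
    have : g (T y) ∈ (LinearMap.range T).map g := ⟨T y, ⟨y, rfl⟩, rfl⟩
    rw [hgmap] at this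
    exact (Submodule.mem_bot ℚ).mp this
  have hrep : ∀ y : ι → ℚ, g y = ∑ l, y l * g (Pi.single l 1) := by
    intro y
    have hy : y = ∑ l, y l • (Pi.single l (1 : ℚ) : ι → ℚ) := by
      funext j
      simp [Pi.single_apply]
    calc g y = g (∑ l, y l • (Pi.single l (1 : ℚ) : ι → ℚ)) := by rw [← hy]
      _ = ∑ l, y l * g (Pi.single l 1) := by
          rw [map_sum]; simp [smul_eq_mul]
  set w : ι → ℚ := fun l => g (Pi.single l 1) with hw
  have hcol : ∀ i, ∑ l, M l i * w l = 0 := by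
    intro i
    have h1 : g (T (Pi.single i 1)) = 0 := hg _
    rw [hrep] at h1
    have h2 : ∀ l, T (Pi.single i 1) l = M l i := by
      intro l
      simp [hT, Pi.single_apply, Finset.sum_ite_eq', mul_ite]
    calc ∑ l, M l i * w l = ∑ l, T (Pi.single i 1) l * w l :=
          Finset.sum_congr rfl fun l _ => by rw [h2]
      _ = 0 := h1
  have key : ((∑ l, v l * w l : ℚ) : ℝ) = 0 := by
    push_cast
    calc ∑ l, (v l : ℝ) * (w l : ℝ)
        = ∑ l, (w l : ℝ) * (v l : ℝ) :=
          Finset.sum_congr rfl fun l _ => mul_comm _ _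
      _ = ∑ l, (w l : ℝ) * ∑ i, (M l i : ℝ) * x i :=
          Finset.sum_congr rfl fun l _ => by rw [hx]
      _ = ∑ l, ∑ i, (w l : ℝ) * ((M l i : ℝ) * x i) := by
          simp [Finset.mul_sum]
      _ = ∑ i, ∑ l, (w l : ℝ) * ((M l i : ℝ) * x i) := Finset.sum_comm
      _ = ∑ i, (((∑ l, M l i * w l : ℚ)) : ℝ) * x i := by
          refine Finset.sum_congr rfl fun i _ => ?_
          push_cast
          rw [Finset.sum_mul]
          exact Finset.sum_congr rfl fun l _ => by ring
      _ = 0 := by simp [hcol]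
  apply hg0
  rw [hrep v]
  exact_mod_cast key

/-- Let `ℓ₁, …, ℓ_s` (`s ≥ 1`) be linear functionals on `ℝⁿ` (with the
standard inner ℝ product) with rational coefficients and `f x := max_i ℓ_i x`. If `f` is
negative at some unit vector and `h` is the unique unit vector minimizing `f` over the
unit sphere, then the ray `ℝ_{>0}·h` contains a nonzero rational point. -/
theorem ray_through_minimizer_contains_rational_point
    (n s : ℕ) (hs : 1 ≤ s) (q : Fin s → Fin n → ℚ)
    (f : EuclideanSpace ℝ (Fin n) → ℝ)
    (hf : ∀ x, f x = ⨆ i : Fin s, ∑ j, (q i j : ℝ) * x j)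
    (hneg : ∃ x : EuclideanSpace ℝ (Fin n), ‖x‖ = 1 ∧ f x < 0)
    (h : EuclideanSpace ℝ (Fin n)) (hh : ‖h‖ = 1)
    (hmin : ∀ x : EuclideanSpace ℝ (Fin n), ‖x‖ = 1 → f h ≤ f x)
    (huniq : ∀ h' : EuclideanSpace ℝ (Fin n), ‖h'‖ = 1 →
      (∀ x : EuclideanSpace ℝ (Fin n), ‖x‖ = 1 → f h' ≤ f x) → h' = h) :
    ∃ c : ℝ, 0 < c ∧ ∀ j : Fin n, ∃ r : ℚ, c * h j = (r : ℝ) := by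
  classical
  haveI : Nonempty (Fin s) := ⟨⟨0, hs⟩⟩
  set a : Fin s → EuclideanSpace ℝ (Fin n) :=
    fun i => (WithLp.equiv 2 (Fin n → ℝ)).symm (fun j => (q i j : ℝ)) with ha
  have haj : ∀ i j, a i j = (q i j : ℝ) := fun i j => rfl
  have hinner : ∀ (x y : EuclideanSpace ℝ (Fin n)),
      (inner ℝ x y : ℝ) = ∑ j, x j * y j := by
    intro x y
    simp [PiLp.inner_apply, RCLike.inner_apply, starRingEnd_apply]
    exact Finset.sum_congr rfl fun j _ => mul_comm _ _
  have hfa : ∀ x, f x = ⨆ i, (inner ℝ (a i) x : ℝ) := by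
    intro x
    rw [hf]
    exact congrArg _ (funext fun i => (hinner (a i) x).symm)
  -- the convex hull of the coefficient vectors
  set K : Set (EuclideanSpace ℝ (Fin n)) := convexHull ℝ (Set.range a) with hK
  have hKconv : Convex ℝ K := convex_convexHull ℝ _
  have haK : ∀ i, a i ∈ K := fun i => subset_convexHull ℝ _ ⟨i, rfl⟩
  have hKne : K.Nonempty := ⟨a ⟨0, hs⟩, haK _⟩
  have hKcompact : IsCompact K := (Set.finite_range a).isCompact_convexHull ℝ
  have hKcomplete : IsComplete K := hKcompact.isClosed.isComplete
  -- the minimal-norm point of K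
  obtain ⟨p, hpK, hpmin⟩ :=
    exists_norm_eq_iInf_of_complete_convex hKne hKcomplete hKconv 0
  rw [norm_eq_iInf_iff_real_inner_le_zero hKconv hpK] at hpmin
  have hip : ∀ w ∈ K, (inner ℝ p p : ℝ) ≤ inner ℝ p w := by
    intro w hw
    have := hpmin w hw
    rw [zero_sub, inner_sub_right, inner_neg_left, inner_neg_left] at this
    linarith
  -- bounding linear functionals on K by the sup over the generators
  have hbdd : ∀ y : EuclideanSpace ℝ (Fin n),
      BddAbove (Set.range fun i => (inner ℝ (a i) y : ℝ)) :=
    fun y => (Set.finite_range _).bddAbove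
  have hhalf : ∀ x ∈ K, ∀ y : EuclideanSpace ℝ (Fin n),
      (inner ℝ x y : ℝ) ≤ ⨆ i, (inner ℝ (a i) y : ℝ) := by
    intro x hx y
    have hlin : IsLinearMap ℝ (fun z : EuclideanSpace ℝ (Fin n) => (inner ℝ z y : ℝ)) :=
      ⟨fun u v => inner_add_left u v y, fun c u => real_inner_smul_left u y c⟩
    have hconv : Convex ℝ {z : EuclideanSpace ℝ (Fin n) |
        (inner ℝ z y : ℝ) ≤ ⨆ i, (inner ℝ (a i) y : ℝ)} := convex_halfSpace_le hlin _
    have hsub : Set.range a ⊆ {z : EuclideanSpace ℝ (Fin n) |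
        (inner ℝ z y : ℝ) ≤ ⨆ i, (inner ℝ (a i) y : ℝ)} := by
      rintro _ ⟨i, rfl⟩
      exact le_ciSup (hbdd y) i
    exact convexHull_min hsub hconv hx
  -- p ≠ 0
  have hpne : p ≠ 0 := by
    obtain ⟨x₀, -, hfx₀⟩ := hneg
    intro hp0
    have h1 : (inner ℝ p x₀ : ℝ) ≤ f x₀ := by rw [hfa]; exact hhalf p hpK x₀
    rw [hp0, inner_zero_left] at h1
    linarith
  have hpnorm : 0 < ‖p‖ := norm_pos_iff.mpr hpne
  set m : ℝ := ‖p‖ with hm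
  -- the unit vector -p/‖p‖ is a minimizer, so h = -p/‖p‖
  set u : EuclideanSpace ℝ (Fin n) := (-m⁻¹) • p with hu
  have hunorm : ‖u‖ = 1 := by
    rw [hu, norm_smul, norm_neg, norm_inv, Real.norm_eq_abs, abs_of_pos hpnorm]
    field_simp
    exact hm.symm
  have hppm : (inner ℝ p p : ℝ) = m ^ 2 := by
    rw [real_inner_self_eq_norm_sq]
  have hfu : f u ≤ -m := by
    rw [hfa]
    refine ciSup_le fun i => ?_
    rw [hu, real_inner_smul_right]
    have h1 : m ^ 2 ≤ inner ℝ (a i) p := by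
      rw [← hppm, real_inner_comm p (a i)]
      exact hip (a i) (haK i)
    have h2 : (0 : ℝ) < m⁻¹ := inv_pos.mpr hpnorm
    nlinarith [h1, h2, mul_inv_cancel₀ hpnorm.ne']
  have hlow : ∀ x : EuclideanSpace ℝ (Fin n), ‖x‖ = 1 → -m ≤ f x := by
    intro x hx
    have h1 : (inner ℝ p x : ℝ) ≤ f x := by rw [hfa]; exact hhalf p hpK x
    have h2 : |(inner ℝ p x : ℝ)| ≤ ‖p‖ * ‖x‖ := abs_real_inner_le_norm p x
    rw [hx, mul_one] at h2
    have := abs_le.mp h2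
    linarith [this.1]
  have hhu : h = u := (huniq u hunorm fun x hx => le_trans hfu (hlow x hx)).symm
  -- now show that p has rational coordinates
  -- first, get a convex combination representing p
  have hpK' := hpK
  rw [hK, convexHull_range_eq_exists_affineCombination] at hpK'
  obtain ⟨t, w, hw0, hw1, hcomb⟩ := hpK'
  rw [Finset.affineCombination_eq_linear_combination t a w hw1] at hcomb
  set lam : Fin s → ℝ := fun i => if i ∈ t then w i else 0 with hlamdef
  have hlam0 : ∀ i, 0 ≤ lam i := by
    intro i
    by_cases hi : i ∈ t <;> simp [hlamdef, hi, hw0 i]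
  have hlam1 : ∑ i, lam i = 1 := by
    rw [hlamdef]
    rw [Finset.sum_ite_mem, Finset.univ_inter, hw1]
  have hlamp : ∑ i, lam i • a i = p := by
    rw [← hcomb, hlamdef]
    simp only [ite_smul, zero_smul]
    rw [Finset.sum_ite_mem, Finset.univ_inter]
  set I : Finset (Fin s) := Finset.univ.filter (fun i => lam i ≠ 0) with hIdef
  have hlamI : ∀ i, i ∉ I → lam i = 0 := by
    intro i hi
    by_contra hne
    exact hi (Finset.mem_filter.mpr ⟨Finset.mem_univ i, hne⟩)
  obtain ⟨i0, -, hi0ne⟩ := Finset.exists_ne_zero_of_sum_ne_zero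
    (hlam1 ▸ (one_ne_zero : (1:ℝ) ≠ 0))
  have hi0 : i0 ∈ I := Finset.mem_filter.mpr ⟨Finset.mem_univ i0, hi0ne⟩
  -- active constraints
  have hact : ∀ i ∈ I, (inner ℝ p (a i) : ℝ) = inner ℝ p p := by
    have hsum : ∑ i, lam i * (inner ℝ p (a i) : ℝ) = inner ℝ p p := by
      calc ∑ i, lam i * (inner ℝ p (a i) : ℝ)
          = ∑ i, (inner ℝ p (lam i • a i) : ℝ) :=
            Finset.sum_congr rfl fun i _ => (real_inner_smul_right p (a i) (lam i)).symm
        _ = (inner ℝ p (∑ i, lam i • a i) : ℝ) := (inner_sum _ _ _).symm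
        _ = inner ℝ p p := by rw [hlamp]
    have hsum2 : ∑ i, lam i * (inner ℝ p p : ℝ) = inner ℝ p p := by
      rw [← Finset.sum_mul, hlam1, one_mul]
    have hle : ∀ i ∈ Finset.univ, lam i * (inner ℝ p p : ℝ) ≤ lam i * inner ℝ p (a i) :=
      fun i _ => mul_le_mul_of_nonneg_left (hip (a i) (haK i)) (hlam0 i)
    have heq := (Finset.sum_eq_sum_iff_of_le hle).mp (by rw [hsum, hsum2])
    intro i hi
    have hIne : lam i ≠ 0 := (Finset.mem_filter.mp hi).2
    have := heq i (Finset.mem_univ i)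
    exact (mul_left_cancel₀ hIne this).symm
  set b : Fin s → EuclideanSpace ℝ (Fin n) := fun i => a i - a i0 with hb
  have ho : ∀ l ∈ I, (inner ℝ p (b l) : ℝ) = 0 := by
    intro l hl
    rw [hb, inner_sub_right, hact l hl, hact i0 hi0, sub_self]
  -- p = a i0 + ∑_{i ∈ I} lam i • b i
  have hsumI : ∑ i ∈ I, lam i • a i = p := by
    rw [← hlamp]
    exact Finset.sum_subset (Finset.subset_univ I)
      (fun i _ hi => by rw [hlamI i hi, zero_smul])
  have hsumI1 : ∑ i ∈ I, lam i = 1 := by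
    rw [← hlam1]
    exact Finset.sum_subset (Finset.subset_univ I) (fun i _ hi => hlamI i hi)
  have hpdecomp : a i0 + ∑ i ∈ I, lam i • b i = p := by
    rw [hb]
    have : ∑ i ∈ I, lam i • (a i - a i0)
        = (∑ i ∈ I, lam i • a i) - (∑ i ∈ I, lam i) • a i0 := by
      rw [Finset.sum_smul]
      rw [← Finset.sum_sub_distrib]
      exact Finset.sum_congr rfl fun i _ => by rw [smul_sub]
    rw [this, hsumI, hsumI1, one_smul]
    abel
  -- the rational linear system for the coefficients
  set bq : Fin s → Fin n → ℚ := fun i j => q i j - q i0 j with hbq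
  have hbj : ∀ (i : Fin s) (j : Fin n), b i j = ((bq i j : ℚ) : ℝ) := by
    intro i j
    rw [hb]
    show a i j - a i0 j = _
    rw [haj, haj, hbq]
    push_cast
    ring
  set M : ↥I → ↥I → ℚ := fun l i => ∑ j, bq i j * bq l j with hMdef
  set v : ↥I → ℚ := fun l => -∑ j, q i0 j * bq l j with hvdef
  have hM : ∀ l i : ↥I, ((M l i : ℚ) : ℝ) = inner ℝ (b (i : Fin s)) (b (l : Fin s)) := by
    intro l i
    rw [hinner, hMdef]
    push_cast
    exact Finset.sum_congr rfl fun j _ => by rw [hbj, hbj]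
  have hv : ∀ l : ↥I, ((v l : ℚ) : ℝ) = -(inner ℝ (a i0) (b (l : Fin s)) : ℝ) := by
    intro l
    rw [hinner, hvdef]
    push_cast
    congr 1
    exact Finset.sum_congr rfl fun j _ => by rw [haj, hbj]
  -- the restriction of lam is a real solution
  have hxr : ∀ l : ↥I, ∑ i : ↥I, ((M l i : ℚ) : ℝ) * lam (i : Fin s) = ((v l : ℚ) : ℝ) := by
    intro l
    have hcalc : ∑ i : ↥I, ((M l i : ℚ) : ℝ) * lam (i : Fin s)
        = (inner ℝ (∑ i ∈ I, lam i • b i) (b (l : Fin s)) : ℝ) := by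
      rw [sum_inner]
      rw [← Finset.sum_coe_sort I (fun i => (inner ℝ (lam i • b i) (b (l : Fin s)) : ℝ))]
      refine Finset.sum_congr rfl fun i _ => ?_
      rw [real_inner_smul_left, hM]
      ring
    rw [hcalc, hv]
    have h1 : (∑ i ∈ I, lam i • b i) = p - a i0 := by
      rw [← hpdecomp]; abel
    rw [h1, inner_sub_left, ho (l : Fin s) l.2]
    ring
  obtain ⟨y, hy⟩ := rat_solvable M v (fun i => lam (i : Fin s)) hxr
  -- the rational solution gives back p
  set p' : EuclideanSpace ℝ (Fin n) := a i0 + ∑ i : ↥I, ((y i : ℚ) : ℝ) • b (i : Fin s) with hp'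
  have hp'o : ∀ l : ↥I, (inner ℝ p' (b (l : Fin s)) : ℝ) = 0 := by
    intro l
    rw [hp', inner_add_left, sum_inner]
    have h2 : ∑ i : ↥I, (inner ℝ (((y i : ℚ) : ℝ) • b (i : Fin s)) (b (l : Fin s)) : ℝ)
        = ((v l : ℚ) : ℝ) := by
      have := hy l
      have hcast : ((∑ i : ↥I, M l i * y i : ℚ) : ℝ) = ((v l : ℚ) : ℝ) := by exact_mod_cast this
      rw [← hcast]
      push_cast
      refine Finset.sum_congr rfl fun i _ => ?_
      rw [real_inner_smul_left, hM]
      ring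
    rw [h2, hv]
    ring
  have hpp' : p = p' := by
    have hdiff : p' - p = ∑ i : ↥I, (((y i : ℚ) : ℝ) - lam (i : Fin s)) • b (i : Fin s) := by
      rw [hp', ← hpdecomp]
      rw [← Finset.sum_coe_sort I (fun i => lam i • b i)]
      simp only [sub_smul]
      rw [Finset.sum_sub_distrib]
      abel
    have hdz : (inner ℝ (p' - p) (p' - p) : ℝ) = 0 := by
      nth_rewrite 1 [hdiff]
      rw [sum_inner]
      refine Finset.sum_eq_zero fun i _ => ?_
      rw [real_inner_smul_left]
      have : (inner ℝ (b (i : Fin s)) (p' - p) : ℝ) = 0 := by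
        rw [inner_sub_right, real_inner_comm p' (b (i : Fin s)), real_inner_comm p (b (i : Fin s)),
          hp'o i, ho (i : Fin s) i.2, sub_self]
      rw [this, mul_zero]
    have h3 : p' - p = 0 := inner_self_eq_zero.mp hdz
    have := sub_eq_zero.mp h3
    exact this.symm
  -- coordinates of p are rational
  have hpj : ∀ j : Fin n, p j = ((q i0 j + ∑ i : ↥I, y i * bq (i : Fin s) j : ℚ) : ℝ) := by
    intro j
    rw [hpp', hp']
    have h4 : (a i0 + ∑ i : ↥I, ((y i : ℚ) : ℝ) • b (i : Fin s)) j
        = a i0 j + (EuclideanSpace.proj j) (∑ i : ↥I, ((y i : ℚ) : ℝ) • b (i : Fin s)) := rfl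
    rw [h4, map_sum]
    have h5 : ∀ i : ↥I, (EuclideanSpace.proj j) (((y i : ℚ) : ℝ) • b (i : Fin s))
        = ((y i : ℚ) : ℝ) * b (i : Fin s) j := by
      intro i
      rw [map_smul]
      rfl
    rw [Finset.sum_congr rfl fun i _ => h5 i]
    rw [haj]
    push_cast
    refine congrArg _ (Finset.sum_congr rfl fun i _ => ?_)
    rw [hbj]
  -- conclusion
  refine ⟨m, hpnorm, fun j => ?_⟩
  refine ⟨-(q i0 j + ∑ i : ↥I, y i * bq (i : Fin s) j), ?_⟩
  have hhj : h j = -m⁻¹ * p j := by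
    rw [hhu, hu]
    rfl
  rw [hhj, hpj j]
  push_cast
  field_simp
end

section
/- Let V be a finite-dimensional real inner product space, and let P₁ and P₂ be nonempty compact convex subsets of V contained in an affine hyperplane L with 0 ∉ L. Let P be the convex join of P₁ and P₂, i.e., the union of all segments [x,y] with x ∈ P₁ and y ∈ P₂. Let μ₁, μ₂ be linear functionals on V such that μ₂ vanishes identically on P₁ and μ₂(y) > 0 for all y ∈ P₂. Then for every ε > 0 there exists η_ε > 0 such that for all real η > η_ε and all λ ∈ P: if μ₁(λ)/‖λ‖ + η·μ₂(λ)/‖λ‖ < 0, then the distance from λ to P₁ is less than ε. -/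
/-!
Write `l = lineMap x y t` with `x ∈ P₁`, `y ∈ P₂`, `t ∈ [0, 1]`. Then `infDist l P₁ ≤ t * D` with
`D = diam (P₁ ∪ P₂)`, while `μ₂ l = t * μ₂ y ≥ t * c` for a positive lower bound `c` of `μ₂` on the
compact set `P₂`. As `μ₁` is bounded by some `C` on the bounded join, negativity of
`μ₁ l + η * μ₂ l` forces `η * t * c < C`, so `t = O(1/η)` and `l` is close to `P₁` for large `η`.
-/

open AffineMap Bornology Metric

theorem Bornology.IsBounded.convexJoin {E : Type*} [SeminormedAddCommGroup E] [NormedSpace ℝ E]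
    {s t : Set E} (hs : IsBounded s) (ht : IsBounded t) : IsBounded (convexJoin ℝ s t) :=
  (isBounded_convexHull.2 (hs.union ht)).subset (convexJoin_subset_convexHull s t)

theorem infDist_lineMap_le {E : Type*} [SeminormedAddCommGroup E] [NormedSpace ℝ E]
    {s : Set E} {x : E} (hx : x ∈ s) (y : E) {t : ℝ} (ht : 0 ≤ t) :
    infDist (lineMap x y t) s ≤ t * dist x y :=
  (infDist_le_dist_of_mem hx).trans_eq <| by rw [dist_lineMap_left, Real.norm_of_nonneg ht]

theorem LinearMap.map_lineMap_of_map_eq_zero {R M : Type*} [CommRing R] [AddCommGroup M]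
    [Module R M] (f : M →ₗ[R] R) {x : M} (hx : f x = 0) (y : M) (t : R) :
    f (lineMap x y t) = t * f y := by
  simp [lineMap_apply_module, hx]

theorem mul_lt_of_mul_mul_lt {η c t C D ε : ℝ} (hc : 0 < c) (hε : 0 < ε) (hC : 0 ≤ C)
    (hD : 0 ≤ D) (hη : (C * D + 1) / (c * ε) < η) (h : η * (t * c) < C) : t * D < ε := by
  have hη₀ : 0 < η := lt_trans (by positivity) hη
  rw [div_lt_iff₀ (by positivity)] at hη
  by_contra! hle
  nlinarith [mul_le_mul_of_nonneg_left hle (mul_pos hη₀ hc).le,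
    mul_le_mul_of_nonneg_right h.le hD]

theorem negativity_forces_proximity_to_face_general
    (V : Type*) [NormedAddCommGroup V] [InnerProductSpace ℝ V] [FiniteDimensional ℝ V]
    (P₁ P₂ : Set V)
    (hcP₁ : IsCompact P₁) (hcP₂ : IsCompact P₂)
    (μ₁ μ₂ : V →ₗ[ℝ] ℝ)
    (hμ₂P₁ : ∀ x ∈ P₁, μ₂ x = 0) (hμ₂P₂ : ∀ y ∈ P₂, 0 < μ₂ y) :
    ∀ ε : ℝ, 0 < ε → ∃ ηε : ℝ, 0 < ηε ∧ ∀ η : ℝ, ηε < η →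
      ∀ l ∈ convexJoin ℝ P₁ P₂,
        μ₁ l / ‖l‖ + η * (μ₂ l / ‖l‖) < 0 → Metric.infDist l P₁ < ε := by
  intro ε hε
  have hP : IsBounded (P₁ ∪ P₂) := hcP₁.isBounded.union hcP₂.isBounded
  obtain ⟨c, hc, hcμ₂⟩ :=
    hcP₂.exists_forall_le' μ₂.continuous_of_finiteDimensional.continuousOn hμ₂P₂
  obtain ⟨C, hC, hCμ₁⟩ := (μ₁.toContinuousLinearMap.lipschitz.isBounded_image
    (hcP₁.isBounded.convexJoin hcP₂.isBounded)).exists_pos_norm_le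
  set D := diam (P₁ ∪ P₂)
  refine ⟨(C * D + 1) / (c * ε), by positivity, fun η hη l hl hneg => ?_⟩
  obtain ⟨x, hx, y, hy, hseg⟩ := mem_convexJoin.1 hl
  rw [segment_eq_image_lineMap] at hseg
  obtain ⟨t, ht, rfl⟩ := hseg
  have hnum : μ₁ (lineMap x y t) + η * (t * μ₂ y) < 0 := by
    rw [← μ₂.map_lineMap_of_map_eq_zero (hμ₂P₁ x hx)]
    exact neg_of_div_neg_left (by rwa [add_div, mul_div_assoc]) (norm_nonneg _)
  have hη₀ : 0 < η := lt_trans (by positivity) hη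
  have hparam : η * (t * c) < C := calc
    η * (t * c) ≤ η * (t * μ₂ y) := by gcongr; exacts [ht.1, hcμ₂ y hy]
    _ < -μ₁ (lineMap x y t) := by linarith
    _ ≤ C := (neg_le_abs _).trans (hCμ₁ _ ⟨_, hl, rfl⟩)
  calc infDist (lineMap x y t) P₁ ≤ t * dist x y := infDist_lineMap_le hx y ht.1
    _ ≤ t * D := mul_le_mul_of_nonneg_left (dist_le_diam_of_mem hP (.inl hx) (.inr hy)) ht.1
    _ < ε := mul_lt_of_mul_mul_lt hc hε hC.le diam_nonneg hη hparam

/-- Let `P₁, P₂` be nonempty compact convex subsets of a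
finite-dimensional real inner product space, contained in an affine hyperplane
`L = {x | g x = 1}` not containing `0`, and let `P` be their convex join. Let `μ₁, μ₂` be
linear functionals with `μ₂ ≡ 0` on `P₁` and `μ₂ > 0` on `P₂`. Then for every `ε > 0`
there is `η_ε > 0` such that for all `η > η_ε` and all `λ ∈ P`, if
`μ₁(λ)/‖λ‖ + η·μ₂(λ)/‖λ‖ < 0` then `dist(λ, P₁) < ε`. -/
theorem negativity_forces_proximity_to_face
    (V : Type*) [NormedAddCommGroup V] [InnerProductSpace ℝ V] [FiniteDimensional ℝ V]
    (P₁ P₂ : Set V) (hP₁ : P₁.Nonempty) (hP₂ : P₂.Nonempty)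
    (hcP₁ : IsCompact P₁) (hcP₂ : IsCompact P₂)
    (hconvP₁ : Convex ℝ P₁) (hconvP₂ : Convex ℝ P₂)
    (g : V →ₗ[ℝ] ℝ) (hgP₁ : ∀ x ∈ P₁, g x = 1) (hgP₂ : ∀ y ∈ P₂, g y = 1)
    (μ₁ μ₂ : V →ₗ[ℝ] ℝ)
    (hμ₂P₁ : ∀ x ∈ P₁, μ₂ x = 0) (hμ₂P₂ : ∀ y ∈ P₂, 0 < μ₂ y) :
    ∀ ε : ℝ, 0 < ε → ∃ ηε : ℝ, 0 < ηε ∧ ∀ η : ℝ, ηε < η →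
      ∀ l ∈ convexJoin ℝ P₁ P₂,
        μ₁ l / ‖l‖ + η * (μ₂ l / ‖l‖) < 0 → Metric.infDist l P₁ < ε :=
  negativity_forces_proximity_to_face_general V P₁ P₂ hcP₁ hcP₂ μ₁ μ₂ hμ₂P₁ hμ₂P₂
end

section
/- Let V be a finite-dimensional real inner product space, and let P₁ and P₂ be nonempty compact subsets of V contained in an affine hyperplane L with 0 ∉ L. Let χ be a linear functional on V vanishing identically on P₁ and strictly positive on P₂. Then there exists ε₀ with 0 < ε₀ ≤ 1 such that for all x ∈ P₁, y ∈ P₂ and all t ∈ [0, ε₀], the derivative at t of the function s ↦ χ((1−s)x + sy)/‖(1−s)x + sy‖ is strictly positive. -/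
open scoped RealInnerProductSpace

/-! With `c t = (1 - t) • x + t • y` and `χ x = 0`, the quotient rule gives the derivative
`χ y * ⟪c t, x⟫ / ‖c t‖ ^ 3`, since `‖c t‖ ^ 2 - t * ⟪c t, y - x⟫ = ⟪c t, x⟫`.
Its sign is that of `⟪c t, x⟫ ≥ ‖x‖ * (‖x‖ - t * ‖y - x‖)`, which is positive for small `t`
uniformly on `P₁ × P₂`: `‖x‖` is bounded below on the closed set `P₁ ∌ 0`, and `‖y - x‖` by the
diameter of `P₁ ∪ P₂`. -/

theorem IsClosed.exists_pos_le_norm {E : Type*} [SeminormedAddCommGroup E] {s : Set E}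
    (hs : IsClosed s) (h0 : (0 : E) ∉ s) : ∃ r > 0, ∀ x ∈ s, r ≤ ‖x‖ := by
  obtain ⟨r, hr, hball⟩ := Metric.isOpen_iff.mp hs.isOpen_compl 0 h0
  exact ⟨r, hr, fun x hx => not_lt.mp fun hxr => hball (mem_ball_zero_iff.mpr hxr) hx⟩

section InnerProductSpace

variable {F : Type*} [NormedAddCommGroup F] [InnerProductSpace ℝ F]

theorem HasDerivAt.norm {f : ℝ → F} {f' : F} {t : ℝ} (hf : HasDerivAt f f' t) (h0 : f t ≠ 0) :
    HasDerivAt (fun s => ‖f s‖) (⟪f t, f'⟫ / ‖f t‖) t := by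
  have hsqrt := hf.norm_sq.sqrt (by positivity)
  simp only [Real.sqrt_sq (norm_nonneg _)] at hsqrt
  convert hsqrt using 1
  field_simp

theorem inner_segment_self_pos {x y : F} {t : ℝ} (ht : 0 ≤ t) (h : t * ‖y - x‖ < ‖x‖) :
    0 < ⟪(1 - t) • x + t • y, x⟫ := by
  have hseg : (1 - t) • x + t • y = x + t • (y - x) := by module
  have hcs : -(‖y - x‖ * ‖x‖) ≤ ⟪y - x, x⟫ := (abs_le.mp (abs_real_inner_le_norm _ _)).1
  have hx : 0 < ‖x‖ := (mul_nonneg ht (norm_nonneg _)).trans_lt h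
  rw [hseg, inner_add_left, real_inner_smul_left, real_inner_self_eq_norm_sq]
  nlinarith [mul_le_mul_of_nonneg_left hcs ht]

theorem hasDerivAt_div_norm_segment (χ : F →ₗ[ℝ] ℝ) {x y : F} (hχx : χ x = 0) {t : ℝ}
    (h0 : (1 - t) • x + t • y ≠ 0) :
    HasDerivAt (fun s : ℝ => χ ((1 - s) • x + s • y) / ‖(1 - s) • x + s • y‖)
      (χ y * ⟪(1 - t) • x + t • y, x⟫ / ‖(1 - t) • x + t • y‖ ^ 3) t := by
  have hnum : HasDerivAt (fun s : ℝ => χ ((1 - s) • x + s • y)) (χ y) t := by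
    have hlin : (fun s : ℝ => χ ((1 - s) • x + s • y)) = fun s => s * χ y := by
      ext s; simp [hχx]
    rw [hlin]
    exact hasDerivAt_mul_const (χ y)
  have hseg : HasDerivAt (fun s : ℝ => (1 - s) • x + s • y) (y - x) t := by
    rw [← funext (AffineMap.lineMap_apply_module (k := ℝ) x y)]
    exact AffineMap.hasDerivAt_lineMap
  have hquot := hnum.div (hseg.norm h0) (norm_ne_zero_iff.mpr h0)
  refine hquot.congr_deriv ?_
  set c := (1 - t) • x + t • y
  have hχc : χ c = t * χ y := by simp [c, hχx]
  have hc : ⟪c, x⟫ = ‖c‖ ^ 2 - t * ⟪c, y - x⟫ := by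
    have hx : x = c - t • (y - x) := by simp only [c]; module
    conv_lhs => rw [hx]
    rw [inner_sub_right, real_inner_smul_right, real_inner_self_eq_norm_sq]
  have hcn : ‖c‖ ≠ 0 := norm_ne_zero_iff.mpr h0
  rw [hc, hχc]
  field_simp

end InnerProductSpace

theorem deriv_normalized_weight_pos_near_zero_general
    (V : Type*) [NormedAddCommGroup V] [InnerProductSpace ℝ V]
    (P₁ P₂ : Set V)
    (hcP₁ : IsCompact P₁) (hcP₂ : IsCompact P₂)
    (g : V →ₗ[ℝ] ℝ) (hgP₁ : ∀ x ∈ P₁, g x = 1)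
    (χ : V →ₗ[ℝ] ℝ) (hχP₁ : ∀ x ∈ P₁, χ x = 0) (hχP₂ : ∀ y ∈ P₂, 0 < χ y) :
    ∃ ε₀ : ℝ, 0 < ε₀ ∧ ε₀ ≤ 1 ∧
      ∀ x ∈ P₁, ∀ y ∈ P₂, ∀ t ∈ Set.Icc (0 : ℝ) ε₀,
        ∃ d : ℝ, 0 < d ∧
          HasDerivAt (fun s : ℝ => χ ((1 - s) • x + s • y) / ‖(1 - s) • x + s • y‖) d t := by
  obtain ⟨r, hr, hrP₁⟩ := hcP₁.isClosed.exists_pos_le_norm fun h0 => by simpa using hgP₁ 0 h0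
  set D := Metric.diam (P₁ ∪ P₂)
  have hD : 0 ≤ D := Metric.diam_nonneg
  refine ⟨min 1 (r / (D + 1)), by positivity, min_le_left _ _, fun x hx y hy t ht => ?_⟩
  have hyx : ‖y - x‖ ≤ D := by
    rw [← dist_eq_norm]
    exact Metric.dist_le_diam_of_mem (hcP₁.isBounded.union hcP₂.isBounded)
      (Or.inr hy) (Or.inl hx)
  have hsmall : t * ‖y - x‖ < ‖x‖ := calc
    t * ‖y - x‖ ≤ r / (D + 1) * D :=
      mul_le_mul (ht.2.trans (min_le_right _ _)) hyx (norm_nonneg _) (by positivity)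
    _ < r := by rw [div_mul_eq_mul_div, div_lt_iff₀ (by positivity)]; nlinarith
    _ ≤ ‖x‖ := hrP₁ x hx
  have hinner := inner_segment_self_pos ht.1 hsmall
  have h0 : (1 - t) • x + t • y ≠ 0 := fun h => by simp [h] at hinner
  exact ⟨_, by have := hχP₂ y hy; positivity, hasDerivAt_div_norm_segment χ (hχP₁ x hx) h0⟩

/-- Let `P₁, P₂` be nonempty compact subsets of a finite-dimensional
real inner product space, contained in an affine hyperplane `{x | g x = 1}` not
containing `0`, and let `χ` be a linear functional vanishing on `P₁` and strictly
positive on `P₂`. Then there is `ε₀ ∈ (0,1]` such that for all `x ∈ P₁`, `y ∈ P₂` and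
`t ∈ [0, ε₀]`, the derivative at `t` of `s ↦ χ((1−s)x + sy)/‖(1−s)x + sy‖` is strictly
positive. -/
theorem deriv_normalized_weight_pos_near_zero
    (V : Type*) [NormedAddCommGroup V] [InnerProductSpace ℝ V] [FiniteDimensional ℝ V]
    (P₁ P₂ : Set V) (hP₁ : P₁.Nonempty) (hP₂ : P₂.Nonempty)
    (hcP₁ : IsCompact P₁) (hcP₂ : IsCompact P₂)
    (g : V →ₗ[ℝ] ℝ) (hgP₁ : ∀ x ∈ P₁, g x = 1) (hgP₂ : ∀ y ∈ P₂, g y = 1)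
    (χ : V →ₗ[ℝ] ℝ) (hχP₁ : ∀ x ∈ P₁, χ x = 0) (hχP₂ : ∀ y ∈ P₂, 0 < χ y) :
    ∃ ε₀ : ℝ, 0 < ε₀ ∧ ε₀ ≤ 1 ∧
      ∀ x ∈ P₁, ∀ y ∈ P₂, ∀ t ∈ Set.Icc (0 : ℝ) ε₀,
        ∃ d : ℝ, 0 < d ∧
          HasDerivAt (fun s : ℝ => χ ((1 - s) • x + s • y) / ‖(1 - s) • x + s • y‖) d t :=
  deriv_normalized_weight_pos_near_zero_general V P₁ P₂ hcP₁ hcP₂ g hgP₁ χ hχP₁ hχP₂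
end

section
/- Let V be a real normed space, let P₁ and P₂ be nonempty compact subsets of V, and let f be a continuous linear functional on V with f(x) = 0 for all x ∈ P₁ and f(y) ≥ K for all y ∈ P₂, for some constant K > 0. Then for every ε₀ > 0 there exists ε > 0 such that every λ in the convex join of P₁ and P₂ whose distance to P₁ is less than ε can be written as λ = (1−t)x + ty with x ∈ P₁, y ∈ P₂ and 0 ≤ t ≤ ε₀. -/
/-! Since `f` vanishes on `P₁` it is bounded by `‖f‖ · d(λ, P₁)` at `λ`, while at
`λ = (1 - t) x + t y` it equals `t f(y) ≥ t K`; hence `t ≤ ‖f‖ · d(λ, P₁) / K`. -/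

theorem ContinuousLinearMap.apply_le_opNorm_mul_infDist {V : Type*} [SeminormedAddCommGroup V]
    [NormedSpace ℝ V] (f : V →L[ℝ] ℝ) {s : Set V} (hs : s.Nonempty) (hf : ∀ p ∈ s, f p = 0)
    (v : V) : f v ≤ ‖f‖ * Metric.infDist v s := by
  rcases (norm_nonneg f).eq_or_lt with hf0 | hfpos
  · have := (le_abs_self (f v)).trans (f.le_opNorm v)
    rwa [← hf0, zero_mul] at this ⊢
  rw [← div_le_iff₀' hfpos, Metric.le_infDist hs]
  intro p hp
  rw [div_le_iff₀' hfpos, dist_eq_norm]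
  calc f v = f (v - p) := by rw [map_sub, hf p hp, sub_zero]
    _ ≤ ‖f‖ * ‖v - p‖ := (le_abs_self _).trans (f.le_opNorm _)

theorem near_points_of_convexJoin_have_small_parameter_general
    (V : Type*) [NormedAddCommGroup V] [NormedSpace ℝ V]
    (P₁ P₂ : Set V)
    (f : V →L[ℝ] ℝ) (K : ℝ) (hK : 0 < K)
    (hfP₁ : ∀ x ∈ P₁, f x = 0) (hfP₂ : ∀ y ∈ P₂, K ≤ f y) :
    ∀ ε₀ : ℝ, 0 < ε₀ → ∃ ε : ℝ, 0 < ε ∧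
      ∀ l ∈ convexJoin ℝ P₁ P₂, Metric.infDist l P₁ < ε →
        ∃ x ∈ P₁, ∃ y ∈ P₂, ∃ t : ℝ, 0 ≤ t ∧ t ≤ ε₀ ∧ l = (1 - t) • x + t • y := by
  intro ε₀ hε₀
  -- `‖f‖ + 1` rather than `‖f‖`, which may vanish
  refine ⟨ε₀ * K / (‖f‖ + 1), by positivity, ?_⟩
  intro l hl hdist
  obtain ⟨x, hx, y, hy, hl⟩ := mem_convexJoin.mp hl
  rw [segment_eq_image] at hl
  obtain ⟨t, ⟨ht₀, -⟩, rfl⟩ := hl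
  refine ⟨x, hx, y, hy, t, ht₀, ?_, rfl⟩
  set l := (1 - t) • x + t • y
  have hfl : f l = t * f y := by simp [l, hfP₁ x hx]
  rw [lt_div_iff₀ (by positivity)] at hdist
  have hbound : t * K < ε₀ * K :=
    calc t * K ≤ t * f y := mul_le_mul_of_nonneg_left (hfP₂ y hy) ht₀
      _ = f l := hfl.symm
      _ ≤ ‖f‖ * Metric.infDist l P₁ := f.apply_le_opNorm_mul_infDist ⟨x, hx⟩ hfP₁ l
      _ ≤ Metric.infDist l P₁ * (‖f‖ + 1) := by
        nlinarith [Metric.infDist_nonneg (x := l) (s := P₁)]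
      _ < ε₀ * K := hdist
  exact (lt_of_mul_lt_mul_right hbound hK.le).le

/-- Let `P₁, P₂` be nonempty compact subsets of a real normed space and
`f` a continuous linear functional vanishing on `P₁` and bounded below by `K > 0` on
`P₂`. Then for every `ε₀ > 0` there is `ε > 0` such that every point of the convex join
of `P₁` and `P₂` at distance less than `ε` from `P₁` can be written as `(1−t)x + ty` with
`x ∈ P₁`, `y ∈ P₂` and `0 ≤ t ≤ ε₀`. -/
theorem near_points_of_convexJoin_have_small_parameter
    (V : Type*) [NormedAddCommGroup V] [NormedSpace ℝ V]
    (P₁ P₂ : Set V) (hP₁ : P₁.Nonempty) (hP₂ : P₂.Nonempty)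
    (hcP₁ : IsCompact P₁) (hcP₂ : IsCompact P₂)
    (f : V →L[ℝ] ℝ) (K : ℝ) (hK : 0 < K)
    (hfP₁ : ∀ x ∈ P₁, f x = 0) (hfP₂ : ∀ y ∈ P₂, K ≤ f y) :
    ∀ ε₀ : ℝ, 0 < ε₀ → ∃ ε : ℝ, 0 < ε ∧
      ∀ l ∈ convexJoin ℝ P₁ P₂, Metric.infDist l P₁ < ε →
        ∃ x ∈ P₁, ∃ y ∈ P₂, ∃ t : ℝ, 0 ≤ t ∧ t ≤ ε₀ ∧ l = (1 - t) • x + t • y :=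
  near_points_of_convexJoin_have_small_parameter_general V P₁ P₂ f K hK hfP₁ hfP₂
end

section
/- Let V be a finite-dimensional real inner product space and Z ⊂ V a finite nonempty set contained in an affine hyperplane L with 0 ∉ L; let P be the convex hull of Z. Let μ₁, μ₂ be linear functionals on V with μ₂(λ) ≥ 0 for all λ ∈ P, and assume that P₁ := {λ ∈ P : μ₂(λ) = 0} is nonempty. Then there exists η′ > 0 such that for every real η > η′ the following holds: if λ₀ ∈ P minimizes the function λ ↦ μ₁(λ)/‖λ‖ + η·μ₂(λ)/‖λ‖ over P and the minimal value is negative, then μ₂(λ₀) = 0. -/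
set_option maxHeartbeats 1000000

/-- Let `Z` be a finite nonempty subset of a finite-dimensional real
inner product space contained in an affine hyperplane `{x | g x = 1}` not containing
`0`, and let `P` be its convex hull. Let `μ₁, μ₂` be linear functionals with `μ₂ ≥ 0` on
`P` and suppose `P₁ := {λ ∈ P | μ₂ λ = 0}` is nonempty. Then there is `η' > 0` such that
for every `η > η'`, any minimizer `λ₀` over `P` of `λ ↦ μ₁(λ)/‖λ‖ + η·μ₂(λ)/‖λ‖` with
negative minimal value satisfies `μ₂ λ₀ = 0`. -/
theorem minimizer_with_negative_value_lies_in_zero_locus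
    (V : Type*) [NormedAddCommGroup V] [InnerProductSpace ℝ V] [FiniteDimensional ℝ V]
    (Z : Finset V) (hZ : Z.Nonempty)
    (g : V →ₗ[ℝ] ℝ) (hgZ : ∀ z ∈ Z, g z = 1)
    (P : Set V) (hP : P = convexHull ℝ (Z : Set V))
    (μ₁ μ₂ : V →ₗ[ℝ] ℝ) (hμ₂ : ∀ l ∈ P, 0 ≤ μ₂ l)
    (hP₁ : {l ∈ P | μ₂ l = 0}.Nonempty) :
    ∃ η' : ℝ, 0 < η' ∧ ∀ η : ℝ, η' < η →
      ∀ l₀ ∈ P,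
        (∀ l ∈ P, μ₁ l₀ / ‖l₀‖ + η * (μ₂ l₀ / ‖l₀‖) ≤ μ₁ l / ‖l‖ + η * (μ₂ l / ‖l‖)) →
        μ₁ l₀ / ‖l₀‖ + η * (μ₂ l₀ / ‖l₀‖) < 0 →
        μ₂ l₀ = 0 := by
  classical
  subst hP
  obtain ⟨z₀, hz₀⟩ := hZ
  set G : V →L[ℝ] ℝ := LinearMap.toContinuousLinearMap g with hGdef
  set C₁ : ℝ := Z.sup' ⟨z₀, hz₀⟩ (fun z => |μ₁ z|) with hC₁def
  set M : ℝ := Z.sup' ⟨z₀, hz₀⟩ (fun z => ‖z‖) with hMdef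
  set Zp : Finset V := Z.filter (fun z => 0 < μ₂ z) with hZpdef
  set m₂ : ℝ := if h : Zp.Nonempty then Zp.inf' h (fun z => μ₂ z) else 1 with hm₂def
  have hC₁le : ∀ z ∈ Z, |μ₁ z| ≤ C₁ := fun z hz => Finset.le_sup' (fun z => |μ₁ z|) hz
  have hMle : ∀ z ∈ Z, ‖z‖ ≤ M := fun z hz => Finset.le_sup' (fun z => ‖z‖) hz
  have hC₁0 : 0 ≤ C₁ := le_trans (abs_nonneg _) (hC₁le z₀ hz₀)
  have hM0 : 0 ≤ M := le_trans (norm_nonneg _) (hMle z₀ hz₀)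
  have hm₂pos : 0 < m₂ := by
    rw [hm₂def]
    split_ifs with h
    · rw [Finset.lt_inf'_iff]
      intro b hb
      exact (Finset.mem_filter.mp hb).2
    · exact one_pos
  have hm₂le : ∀ z ∈ Z, 0 < μ₂ z → m₂ ≤ μ₂ z := by
    intro z hz hpos
    have hzp : z ∈ Zp := Finset.mem_filter.mpr ⟨hz, hpos⟩
    rw [hm₂def, dif_pos ⟨z, hzp⟩]
    exact Finset.inf'_le _ hzp
  -- facts on the hull
  have hg1 : ∀ l ∈ convexHull ℝ (Z : Set V), g l = 1 := by
    intro l hl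
    have hsub : convexHull ℝ (Z : Set V) ⊆ g ⁻¹' {(1 : ℝ)} :=
      convexHull_min (fun z hz => hgZ z hz) ((convex_singleton (1 : ℝ)).linear_preimage g)
    exact hsub hl
  have hnormpos : ∀ l ∈ convexHull ℝ (Z : Set V), 0 < ‖l‖ := by
    intro l hl
    have hne : l ≠ 0 := by
      intro h
      have := hg1 l hl
      rw [h, map_zero] at this
      norm_num at this
    exact norm_pos_iff.mpr hne
  have hGl : ∀ l ∈ convexHull ℝ (Z : Set V), 1 ≤ ‖G‖ * ‖l‖ := by
    intro l hl
    have h1 : ‖G l‖ ≤ ‖G‖ * ‖l‖ := G.le_opNorm l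
    have h2 : G l = g l := rfl
    rw [h2, hg1 l hl] at h1
    simpa using h1
  have hμ₁lb : ∀ l ∈ convexHull ℝ (Z : Set V), -C₁ ≤ μ₁ l := by
    intro l hl
    have hsub : convexHull ℝ (Z : Set V) ⊆ μ₁ ⁻¹' Set.Ici (-C₁) :=
      convexHull_min (fun z hz => le_trans (neg_le_neg (hC₁le z hz)) (neg_abs_le _))
        ((convex_Ici (-C₁)).linear_preimage μ₁)
    exact hsub hl
  refine ⟨1 + (C₁ * ‖G‖ * M + C₁) / m₂, by positivity, ?_⟩
  intro η hη l₀ hl₀ hmin hneg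
  have hηpos : (0 : ℝ) < η := by
    have h0 : 0 ≤ (C₁ * ‖G‖ * M + C₁) / m₂ := by positivity
    linarith
  set v : ℝ := μ₁ l₀ / ‖l₀‖ + η * (μ₂ l₀ / ‖l₀‖) with hvdef
  have hn₀pos : 0 < ‖l₀‖ := hnormpos l₀ hl₀
  have hvn : μ₁ l₀ + η * μ₂ l₀ = v * ‖l₀‖ := by
    rw [hvdef]; field_simp
  have hμ₂l₀ : 0 ≤ μ₂ l₀ := hμ₂ l₀ hl₀
  have hvlb : -v ≤ C₁ * ‖G‖ := by
    have h1 : μ₁ l₀ / ‖l₀‖ ≤ v := by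
      rw [hvdef]
      have h0 : 0 ≤ η * (μ₂ l₀ / ‖l₀‖) := by positivity
      linarith
    have h2 : -C₁ ≤ μ₁ l₀ := hμ₁lb l₀ hl₀
    have h3 : 1 ≤ ‖G‖ * ‖l₀‖ := hGl l₀ hl₀
    have h4 : -v ≤ C₁ / ‖l₀‖ := by
      have h5 : -μ₁ l₀ / ‖l₀‖ ≤ C₁ / ‖l₀‖ := by gcongr ?_ / ‖l₀‖; linarith
      rw [neg_div] at h5
      linarith
    have h5 : C₁ / ‖l₀‖ ≤ C₁ * ‖G‖ := by
      rw [div_le_iff₀ hn₀pos]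
      calc C₁ = C₁ * 1 := (mul_one _).symm
        _ ≤ C₁ * (‖G‖ * ‖l₀‖) := mul_le_mul_of_nonneg_left h3 hC₁0
        _ = C₁ * ‖G‖ * ‖l₀‖ := by ring
    exact le_trans h4 h5
  -- representation of l₀ as a convex combination
  rw [Finset.convexHull_eq] at hl₀
  obtain ⟨w, hw0, hw1, hwc⟩ := hl₀
  have hl₀sum : l₀ = ∑ y ∈ Z, w y • y := by
    rw [← hwc, Finset.centerMass_eq_of_sum_1 _ _ hw1]
    simp
  have key : ∀ z ∈ Z, 0 < w z → μ₂ z = 0 := by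
    intro z hzZ hwz
    by_contra hne
    have hzP : (z : V) ∈ convexHull ℝ (Z : Set V) := subset_convexHull ℝ _ hzZ
    have hμ₂z : 0 < μ₂ z := lt_of_le_of_ne (hμ₂ z hzP) (Ne.symm hne)
    have hznpos : 0 < ‖z‖ := hnormpos z hzP
    have hwz1 : w z ≤ 1 := by
      have := Finset.single_le_sum hw0 hzZ
      rw [hw1] at this
      exact this
    -- main estimate: μ₁ z + η * μ₂ z ≤ -v * ‖z‖
    have hmain : μ₁ z + η * μ₂ z ≤ -v * ‖z‖ := by
      rcases eq_or_lt_of_le hwz1 with h1 | hlt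
      · -- w z = 1, so l₀ = z
        have hrest : ∀ y ∈ Z.erase z, w y = 0 := by
          have hsum : ∑ y ∈ Z.erase z, w y = 0 := by
            have := Finset.add_sum_erase Z w hzZ
            rw [hw1, ← h1] at this
            linarith
          intro y hy
          have hnn : ∀ y ∈ Z.erase z, 0 ≤ w y := fun y hy => hw0 y (Finset.mem_of_mem_erase hy)
          exact (Finset.sum_eq_zero_iff_of_nonneg hnn).mp hsum y hy
        have hl₀z : l₀ = z := by
          rw [hl₀sum, ← Finset.add_sum_erase Z _ hzZ, h1, one_smul,
            Finset.sum_eq_zero (fun y hy => by rw [hrest y hy, zero_smul]), add_zero]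
        rw [hl₀z] at hvn
        nlinarith [hvn, hneg, hznpos]
      · -- 0 < w z < 1 : move away from z inside P
        obtain ⟨t, htdef⟩ : ∃ x : ℝ, x = w z / (1 - w z) := ⟨_, rfl⟩
        have h1wz : (0 : ℝ) < 1 - w z := by linarith
        have ht : 0 < t := htdef ▸ div_pos hwz h1wz
        obtain ⟨w', hw'def⟩ : ∃ x : V → ℝ,
            x = fun y => (1 + t) * w y - (if y = z then t else 0) := ⟨_, rfl⟩
        have hw'0 : ∀ y ∈ Z, 0 ≤ w' y := by
          intro y hy
          simp only [hw'def]
          by_cases hyz : y = z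
          · subst hyz
            rw [if_pos rfl, htdef]
            have h0 : (1 + w y / (1 - w y)) * w y - w y / (1 - w y) = 0 := by
              field_simp
              ring
            linarith
          · rw [if_neg hyz]
            have : 0 ≤ (1 + t) * w y := mul_nonneg (by linarith) (hw0 y hy)
            linarith
        have hw'1 : ∑ y ∈ Z, w' y = 1 := by
          simp only [hw'def]
          rw [Finset.sum_sub_distrib, ← Finset.mul_sum, hw1, Finset.sum_ite_eq' Z z fun _ => t,
            if_pos hzZ]
          ring
        obtain ⟨lt', hlt'eq⟩ : ∃ x : V, x = (1 + t) • l₀ - t • z := ⟨_, rfl⟩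
        have hite : ∑ y ∈ Z, (if y = z then t else 0) • y = t • z := by
          rw [Finset.sum_eq_single z]
          · rw [if_pos rfl]
          · intro y hy hyz
            rw [if_neg hyz, zero_smul]
          · intro h
            exact absurd hzZ h
        have hcm : Z.centerMass w' id = lt' := by
          rw [Finset.centerMass_eq_of_sum_1 _ _ hw'1]
          simp only [id_eq, hw'def]
          rw [hlt'eq, hl₀sum, Finset.smul_sum]
          rw [← hite, ← Finset.sum_sub_distrib]
          apply Finset.sum_congr rfl
          intro y _
          rw [sub_smul, mul_smul]
        have hlt'P : lt' ∈ convexHull ℝ (Z : Set V) := by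
          rw [Finset.convexHull_eq]
          exact ⟨w', hw'0, hw'1, hcm⟩
        have hlt'pos : 0 < ‖lt'‖ := hnormpos lt' hlt'P
        have hminl : v ≤ (μ₁ lt' + η * μ₂ lt') / ‖lt'‖ := by
          have h := hmin lt' hlt'P
          rw [add_div, mul_div_assoc]
          exact h
        have hcomb : v * ‖lt'‖ ≤ μ₁ lt' + η * μ₂ lt' := (le_div_iff₀ hlt'pos).mp hminl
        have hμ₁lt' : μ₁ lt' = (1 + t) * μ₁ l₀ - t * μ₁ z := by
          rw [hlt'eq, map_sub, map_smul, map_smul, smul_eq_mul, smul_eq_mul]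
        have hμ₂lt' : μ₂ lt' = (1 + t) * μ₂ l₀ - t * μ₂ z := by
          rw [hlt'eq, map_sub, map_smul, map_smul, smul_eq_mul, smul_eq_mul]
        have hnormle : ‖lt'‖ ≤ (1 + t) * ‖l₀‖ + t * ‖z‖ := by
          rw [hlt'eq]
          calc ‖(1 + t) • l₀ - t • z‖ ≤ ‖(1 + t) • l₀‖ + ‖t • z‖ := norm_sub_le _ _
            _ = (1 + t) * ‖l₀‖ + t * ‖z‖ := by
              rw [norm_smul, norm_smul, Real.norm_eq_abs, Real.norm_eq_abs,
                abs_of_nonneg (by linarith : (0:ℝ) ≤ 1 + t), abs_of_nonneg ht.le]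
        have hvmul : v * ((1 + t) * ‖l₀‖ + t * ‖z‖) ≤ v * ‖lt'‖ :=
          mul_le_mul_of_nonpos_left hnormle hneg.le
        -- combine everything
        have hchain : v * ((1 + t) * ‖l₀‖ + t * ‖z‖) ≤
            (1 + t) * (v * ‖l₀‖) - t * (μ₁ z + η * μ₂ z) := by
          calc v * ((1 + t) * ‖l₀‖ + t * ‖z‖) ≤ v * ‖lt'‖ := hvmul
            _ ≤ μ₁ lt' + η * μ₂ lt' := hcomb
            _ = (1 + t) * (μ₁ l₀ + η * μ₂ l₀) - t * (μ₁ z + η * μ₂ z) := by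
                rw [hμ₁lt', hμ₂lt']; ring
            _ = (1 + t) * (v * ‖l₀‖) - t * (μ₁ z + η * μ₂ z) := by rw [hvn]
        nlinarith [hchain, ht]
    -- contradiction with η large
    have hzM : ‖z‖ ≤ M := hMle z hzZ
    have h7 : -v * ‖z‖ ≤ C₁ * ‖G‖ * M := by
      exact mul_le_mul hvlb hzM (norm_nonneg _) (by positivity)
    have h8 : -μ₁ z ≤ C₁ := le_trans (neg_le_abs _) (hC₁le z hzZ)
    have h9 : η * m₂ ≤ η * μ₂ z := mul_le_mul_of_nonneg_left (hm₂le z hzZ hμ₂z) hηpos.le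
    have h10 : η * m₂ ≤ C₁ * ‖G‖ * M + C₁ := by linarith
    have h11 : η ≤ (C₁ * ‖G‖ * M + C₁) / m₂ := (le_div_iff₀ hm₂pos).mpr h10
    linarith
  rw [hl₀sum, map_sum]
  apply Finset.sum_eq_zero
  intro y hy
  rw [map_smul, smul_eq_mul]
  rcases (hw0 y hy).lt_or_eq with h | h
  · rw [key y hy h, mul_zero]
  · rw [← h, zero_mul]
end
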